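/- In W = W(H, θ, z0, z1), the centralizers of u and of d inside H coincide and both equal the fixed subalgebra of θ: for every h ∈ H, ι(h)·u = u·ι(h) if and only if θ(h) = h, if and only if ι(h)·d = d·ι(h). -/
import Mathlib


/-!
STATEMENT: In `W = W(H, θ, z0, z1)`, the centralizers of `u` and of `d` inside `H`
coincide and both equal the fixed subalgebra of `θ`: for every `h ∈ H`,
`ι(h)·u = u·ι(h)` iff `θ(h) = h`, iff `ι(h)·d = d·ι(h)`.
-/

/-- Generators of the triangular generalized Weyl algebra: a copy of `H` plus `d` and `u`. -/
inductive GWAGen (H : Type) where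
  | base : H → GWAGen H
  | d : GWAGen H
  | u : GWAGen H

/-- The defining relations of the triangular GWA `W(H, θ, z0, z1)`:
`ι` is an `F`-algebra map on the copy of `H`, `u·h = θ(h)·u`, `h·d = d·θ(h)`,
and `u·d = z0 + d·z1·u`. -/
inductive GWARel (F : Type) [Field F] (H : Type) [CommRing H] [Algebra F H]
    (θ : H ≃ₐ[F] H) (z0 z1 : H) :
    FreeAlgebra F (GWAGen H) → FreeAlgebra F (GWAGen H) → Prop
  | base_one : GWARel F H θ z0 z1 (FreeAlgebra.ι F (GWAGen.base (1 : H))) 1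
  | base_add (a b : H) : GWARel F H θ z0 z1
      (FreeAlgebra.ι F (GWAGen.base (a + b)))
      (FreeAlgebra.ι F (GWAGen.base a) + FreeAlgebra.ι F (GWAGen.base b))
  | base_mul (a b : H) : GWARel F H θ z0 z1
      (FreeAlgebra.ι F (GWAGen.base (a * b)))
      (FreeAlgebra.ι F (GWAGen.base a) * FreeAlgebra.ι F (GWAGen.base b))
  | base_smul (r : F) (a : H) : GWARel F H θ z0 z1
      (FreeAlgebra.ι F (GWAGen.base (r • a)))
      (r • FreeAlgebra.ι F (GWAGen.base a))
  | u_comm (a : H) : GWARel F H θ z0 z1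
      (FreeAlgebra.ι F GWAGen.u * FreeAlgebra.ι F (GWAGen.base a))
      (FreeAlgebra.ι F (GWAGen.base (θ a)) * FreeAlgebra.ι F GWAGen.u)
  | d_comm (a : H) : GWARel F H θ z0 z1
      (FreeAlgebra.ι F (GWAGen.base a) * FreeAlgebra.ι F GWAGen.d)
      (FreeAlgebra.ι F GWAGen.d * FreeAlgebra.ι F (GWAGen.base (θ a)))
  | ud : GWARel F H θ z0 z1
      (FreeAlgebra.ι F GWAGen.u * FreeAlgebra.ι F GWAGen.d)
      (FreeAlgebra.ι F (GWAGen.base z0) +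
        FreeAlgebra.ι F GWAGen.d * FreeAlgebra.ι F (GWAGen.base z1) * FreeAlgebra.ι F GWAGen.u)

/-- The triangular generalized Weyl algebra `W(H, θ, z0, z1)`, realized as a
`RingQuot` of the free `F`-algebra on the generators. -/
abbrev GWA (F : Type) [Field F] (H : Type) [CommRing H] [Algebra F H]
    (θ : H ≃ₐ[F] H) (z0 z1 : H) : Type :=
  RingQuot (GWARel F H θ z0 z1)

variable (F : Type) [Field F] (H : Type) [CommRing H] [Algebra F H]
variable (θ : H ≃ₐ[F] H) (z0 z1 : H)

/-- The canonical map `ι : H → W`. -/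
noncomputable def GWA.incl (h : H) : GWA F H θ z0 z1 :=
  RingQuot.mkAlgHom F (GWARel F H θ z0 z1) (FreeAlgebra.ι F (GWAGen.base h))

/-- The element `d` of `W`. -/
noncomputable def GWA.dd : GWA F H θ z0 z1 :=
  RingQuot.mkAlgHom F (GWARel F H θ z0 z1) (FreeAlgebra.ι F GWAGen.d)

/-- The element `u` of `W`. -/
noncomputable def GWA.uu : GWA F H θ z0 z1 :=
  RingQuot.mkAlgHom F (GWARel F H θ z0 z1) (FreeAlgebra.ι F GWAGen.u)


/-- module of normal forms -/
abbrev GWAMod : Type := (ℕ × ℕ) →₀ H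

noncomputable def GWAL (h : H) : Module.End F (GWAMod H) :=
  Finsupp.lsum F fun p => Finsupp.lsingle p ∘ₗ LinearMap.mulLeft F ((θ ^ p.1) h)

noncomputable def GWAD : Module.End F (GWAMod H) :=
  Finsupp.lsum F fun p => Finsupp.lsingle (p.1 + 1, p.2)

def GWAs : ℕ → H
  | 0 => 0
  | 1 => z0
  | (i+2) => (θ ^ (i+1)) z0 + (θ ^ i) z1 * GWAs (i+1)

def GWAr : ℕ → H
  | 0 => 1
  | (i+1) => (θ ^ i) z1 * GWAr i

noncomputable def GWAUc : ℕ × ℕ → (H →ₗ[F] GWAMod H)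
  | (0, j) => Finsupp.lsingle (0, j+1) ∘ₗ θ.toLinearMap
  | (k+1, j) =>
      Finsupp.lsingle (k, j) ∘ₗ LinearMap.mulLeft F (GWAs F H θ z0 z1 (k+1))
        + Finsupp.lsingle (k+1, j+1) ∘ₗ
            LinearMap.mulLeft F (GWAr F H θ z1 (k+1)) ∘ₗ θ.toLinearMap

noncomputable def GWAU : Module.End F (GWAMod H) :=
  Finsupp.lsum F (GWAUc F H θ z0 z1)

noncomputable def GWAgen : GWAGen H → Module.End F (GWAMod H)
  | .base h => GWAL F H θ h
  | .d => GWAD F H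
  | .u => GWAU F H θ z0 z1

noncomputable def GWAphi : FreeAlgebra F (GWAGen H) →ₐ[F] Module.End F (GWAMod H) :=
  FreeAlgebra.lift F (GWAgen F H θ z0 z1)

lemma GWAL_single (h : H) (p : ℕ × ℕ) (m : H) :
    GWAL F H θ h (Finsupp.single p m) = Finsupp.single p ((θ ^ p.1) h * m) := by
  simp [GWAL]

lemma GWAD_single (p : ℕ × ℕ) (m : H) :
    GWAD F H (Finsupp.single p m) = Finsupp.single (p.1 + 1, p.2) m := by
  simp [GWAD]

lemma GWAU_single_zero (j : ℕ) (m : H) :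
    GWAU F H θ z0 z1 (Finsupp.single (0, j) m) = Finsupp.single (0, j+1) (θ m) := by
  simp [GWAU, GWAUc]

lemma GWAU_single_succ (k j : ℕ) (m : H) :
    GWAU F H θ z0 z1 (Finsupp.single (k+1, j) m) =
      Finsupp.single (k, j) (GWAs F H θ z0 z1 (k+1) * m)
        + Finsupp.single (k+1, j+1) (GWAr F H θ z1 (k+1) * θ m) := by
  simp [GWAU, GWAUc]

lemma GWArel_sound : ∀ {x y}, GWARel F H θ z0 z1 x y →
    GWAphi F H θ z0 z1 x = GWAphi F H θ z0 z1 y := by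
  intro x y rel
  cases rel with
  | base_one =>
      simp only [GWAphi, FreeAlgebra.lift_ι_apply, map_one, GWAgen]
      apply Finsupp.lhom_ext
      intro p m
      rw [GWAL_single, map_one, one_mul, Module.End.one_apply]
  | base_add a b =>
      simp only [GWAphi, FreeAlgebra.lift_ι_apply, map_add, GWAgen]
      apply Finsupp.lhom_ext
      intro p m
      rw [LinearMap.add_apply, GWAL_single, GWAL_single, GWAL_single, map_add, add_mul,
        Finsupp.single_add]
  | base_mul a b =>
      simp only [GWAphi, FreeAlgebra.lift_ι_apply, map_mul, GWAgen]
      apply Finsupp.lhom_ext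
      intro p m
      rw [Module.End.mul_apply, GWAL_single, GWAL_single, GWAL_single, map_mul, mul_assoc]
  | base_smul r a =>
      simp only [GWAphi, FreeAlgebra.lift_ι_apply, map_smul, GWAgen]
      apply Finsupp.lhom_ext
      intro p m
      rw [LinearMap.smul_apply, GWAL_single, GWAL_single, Finsupp.smul_single, map_smul,
        smul_mul_assoc]
  | u_comm a =>
      simp only [GWAphi, FreeAlgebra.lift_ι_apply, map_mul, GWAgen]
      apply Finsupp.lhom_ext
      rintro ⟨i, j⟩ m
      rw [Module.End.mul_apply, Module.End.mul_apply, GWAL_single]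
      cases i with
      | zero =>
          rw [GWAU_single_zero, GWAU_single_zero, GWAL_single]
          simp [map_mul]
      | succ k =>
          rw [GWAU_single_succ, GWAU_single_succ, map_add, GWAL_single, GWAL_single]
          simp only [map_mul]
          have h1 : (θ ^ k) (θ a) = (θ ^ (k+1)) a := by
            rw [pow_succ, AlgEquiv.mul_apply]
          have h2 : (θ ^ (k+1)) (θ a) = θ ((θ ^ (k+1)) a) := by
            conv_lhs => rw [pow_succ', AlgEquiv.mul_apply]
            rw [h1]
          rw [h1, h2]
          ring_nf
  | d_comm a =>
      simp only [GWAphi, FreeAlgebra.lift_ι_apply, map_mul, GWAgen]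
      apply Finsupp.lhom_ext
      rintro ⟨i, j⟩ m
      rw [Module.End.mul_apply, Module.End.mul_apply, GWAD_single, GWAL_single,
        GWAL_single, GWAD_single]
      have h1 : (θ ^ i) (θ a) = (θ ^ (i+1)) a := by rw [pow_succ, AlgEquiv.mul_apply]
      simp [h1]
  | ud =>
      simp only [GWAphi, FreeAlgebra.lift_ι_apply, map_mul, map_add, GWAgen]
      apply Finsupp.lhom_ext
      rintro ⟨i, j⟩ m
      rw [Module.End.mul_apply, LinearMap.add_apply, Module.End.mul_apply,
        Module.End.mul_apply, GWAD_single, GWAL_single]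
      cases i with
      | zero =>
          rw [GWAU_single_succ, GWAU_single_zero, GWAL_single, GWAD_single]
          simp [GWAs, GWAr]
      | succ k =>
          rw [GWAU_single_succ, GWAU_single_succ, map_add, GWAL_single, GWAL_single,
            map_add, GWAD_single, GWAD_single]
          simp only [GWAs, GWAr]
          rw [add_mul, Finsupp.single_add, mul_assoc, mul_assoc, add_assoc]

noncomputable def GWApsi : GWA F H θ z0 z1 →ₐ[F] Module.End F (GWAMod H) :=
  RingQuot.liftAlgHom F ⟨GWAphi F H θ z0 z1, fun _ _ rel => GWArel_sound F H θ z0 z1 rel⟩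

lemma GWApsi_incl (a : H) : GWApsi F H θ z0 z1 (GWA.incl F H θ z0 z1 a) = GWAL F H θ a := by
  rw [GWA.incl, GWApsi, RingQuot.liftAlgHom_mkAlgHom_apply]
  simp [GWAphi, GWAgen]

lemma GWApsi_uu : GWApsi F H θ z0 z1 (GWA.uu F H θ z0 z1) = GWAU F H θ z0 z1 := by
  rw [GWA.uu, GWApsi, RingQuot.liftAlgHom_mkAlgHom_apply]
  simp [GWAphi, GWAgen]

lemma GWApsi_dd : GWApsi F H θ z0 z1 (GWA.dd F H θ z0 z1) = GWAD F H := by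
  rw [GWA.dd, GWApsi, RingQuot.liftAlgHom_mkAlgHom_apply]
  simp [GWAphi, GWAgen]

lemma GWA_key_u (a : H) :
    GWA.uu F H θ z0 z1 * GWA.incl F H θ z0 z1 a =
      GWA.incl F H θ z0 z1 (θ a) * GWA.uu F H θ z0 z1 := by
  have := RingQuot.mkAlgHom_rel F (GWARel.u_comm (F := F) (H := H) (θ := θ)
    (z0 := z0) (z1 := z1) a)
  rw [map_mul, map_mul] at this
  exact this

lemma GWA_key_d (a : H) :
    GWA.incl F H θ z0 z1 a * GWA.dd F H θ z0 z1 =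
      GWA.dd F H θ z0 z1 * GWA.incl F H θ z0 z1 (θ a) := by
  have := RingQuot.mkAlgHom_rel F (GWARel.d_comm (F := F) (H := H) (θ := θ)
    (z0 := z0) (z1 := z1) a)
  rw [map_mul, map_mul] at this
  exact this

theorem centralizer_u_eq_centralizer_d_eq_fixed (h : H) :
    (GWA.incl F H θ z0 z1 h * GWA.uu F H θ z0 z1 =
        GWA.uu F H θ z0 z1 * GWA.incl F H θ z0 z1 h ↔ θ h = h) ∧
    (GWA.incl F H θ z0 z1 h * GWA.dd F H θ z0 z1 =
        GWA.dd F H θ z0 z1 * GWA.incl F H θ z0 z1 h ↔ θ h = h) := by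
  constructor
  · constructor
    · intro heq
      have e : GWA.incl F H θ z0 z1 h * GWA.uu F H θ z0 z1 =
          GWA.incl F H θ z0 z1 (θ h) * GWA.uu F H θ z0 z1 :=
        heq.trans (GWA_key_u F H θ z0 z1 h)
      have e2 := congrArg (GWApsi F H θ z0 z1) e
      rw [map_mul, map_mul, GWApsi_incl, GWApsi_incl, GWApsi_uu] at e2
      have e3 := congrArg (fun T : Module.End F (GWAMod H) =>
        T (Finsupp.single ((0 : ℕ), (0 : ℕ)) (1 : H))) e2
      simp only [Module.End.mul_apply, GWAU_single_zero, GWAL_single, map_one,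
        pow_zero, AlgEquiv.one_apply, mul_one] at e3
      exact (Finsupp.single_injective _ e3).symm
    · intro hθ
      rw [GWA_key_u F H θ z0 z1 h, hθ]
  · constructor
    · intro heq
      have e : GWA.dd F H θ z0 z1 * GWA.incl F H θ z0 z1 (θ h) =
          GWA.dd F H θ z0 z1 * GWA.incl F H θ z0 z1 h :=
        (GWA_key_d F H θ z0 z1 h).symm.trans heq
      have e2 := congrArg (GWApsi F H θ z0 z1) e
      rw [map_mul, map_mul, GWApsi_incl, GWApsi_incl, GWApsi_dd] at e2
      have e3 := congrArg (fun T : Module.End F (GWAMod H) =>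
        T (Finsupp.single ((0 : ℕ), (0 : ℕ)) (1 : H))) e2
      simp only [Module.End.mul_apply, GWAD_single, GWAL_single, pow_zero,
        AlgEquiv.one_apply, mul_one, pow_one] at e3
      exact (Finsupp.single_injective _ e3)
    · intro hθ
      rw [GWA_key_d F H θ z0 z1 h, hθ]
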